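/- arXiv:2603.05178 — 2 statements merged into one kernel-verified Lean document; each statement's English description precedes it below -/
import Mathlib

section
/- Let γ = [[V,0,C_q,0],[0,1,0,C_p],[C_q,0,W,0],[0,C_p,0,W_p]] be a 4×4 real matrix with V, W, W_p > 0 and VW − C_q² > 0. Then det(γ) ≥ Δ − 1 (where Δ = V + W·W_p + 2 C_q C_p) holds if and only if (C_p + C₀)² ≤ (1 − (W/V)·W₀)(W_p − W₀), where C₀ = C_q/(VW − C_q²) and W₀ = V/(VW − C_q²). -/
open Matrix

/-- det(γ) ≥ Δ − 1 iff (C_p + C₀)² ≤ (1 − (W/V)W₀)(W_p − W₀). -/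
theorem stmt1 (V W Wp Cq Cp : ℝ) (hV : 0 < V) (hW : 0 < W) (hWp : 0 < Wp)
    (hVW : 0 < V * W - Cq ^ 2) :
    (!![V, 0, Cq, 0; 0, 1, 0, Cp; Cq, 0, W, 0; 0, Cp, 0, Wp] : Matrix (Fin 4) (Fin 4) ℝ).det
        ≥ (V + W * Wp + 2 * Cq * Cp) - 1 ↔
      (Cp + Cq / (V * W - Cq ^ 2)) ^ 2 ≤
        (1 - (W / V) * (V / (V * W - Cq ^ 2))) * (Wp - V / (V * W - Cq ^ 2)) := by
  have hd : (0:ℝ) < V * W - Cq ^ 2 := hVW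
  have hd0 : (V * W - Cq ^ 2) ≠ 0 := ne_of_gt hd
  have hV0 : V ≠ 0 := ne_of_gt hV
  have hdet : (!![V, 0, Cq, 0; 0, 1, 0, Cp; Cq, 0, W, 0; 0, Cp, 0, Wp] :
      Matrix (Fin 4) (Fin 4) ℝ).det = (V * W - Cq ^ 2) * (Wp - Cp ^ 2) := by
    simp [Matrix.det_succ_row_zero, Fin.sum_univ_succ, Fin.succAbove]
    ring
  rw [hdet]
  rw [ge_iff_le, ← sub_nonneg, ← sub_nonneg (b := (Cp + Cq / (V * W - Cq ^ 2)) ^ 2)]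
  constructor <;> intro h
  · have key : 0 ≤ ((V*W-Cq^2) - W) * (Wp*(V*W-Cq^2) - V) - (Cp*(V*W-Cq^2) + Cq)^2 := by
      nlinarith [mul_pos hd hd]
    have expand : (1 - (W / V) * (V / (V * W - Cq ^ 2))) * (Wp - V / (V * W - Cq ^ 2))
        - (Cp + Cq / (V * W - Cq ^ 2)) ^ 2
        = (((V*W-Cq^2) - W) * (Wp*(V*W-Cq^2) - V) - (Cp*(V*W-Cq^2) + Cq)^2)
          / (V*W-Cq^2)^2 := by
      have hd0' : W * V - Cq ^ 2 ≠ 0 := by rwa [mul_comm]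
      field_simp
    rw [expand]
    positivity
  · have expand : (1 - (W / V) * (V / (V * W - Cq ^ 2))) * (Wp - V / (V * W - Cq ^ 2))
        - (Cp + Cq / (V * W - Cq ^ 2)) ^ 2
        = (((V*W-Cq^2) - W) * (Wp*(V*W-Cq^2) - V) - (Cp*(V*W-Cq^2) + Cq)^2)
          / (V*W-Cq^2)^2 := by
      have hd0' : W * V - Cq ^ 2 ≠ 0 := by rwa [mul_comm]
      field_simp
    rw [expand, le_div_iff₀ (by positivity)] at h
    nlinarith [mul_pos hd hd]
end

section
/- The boundary values C_{q±} at which the physicality interval [C_p⁻, C_p⁺] for C_p stops containing 0 are given by C_{q±} = ±sqrt((V·W·W_p − V − W·W_p + 1)/W_p); equivalently, 0 ∈ [C_p⁻, C_p⁺] if and only if C_q² ≤ (V W W_p − V − W W_p + 1)/W_p. -/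
/-- 0 belongs to the physicality interval [C_p⁻, C_p⁺] iff
C_q² ≤ (V W W_p − V − W W_p + 1)/W_p, i.e. the boundary values are
C_{q±} = ±sqrt((V W W_p − V − W W_p + 1)/W_p). -/
theorem stmt14 (V W Wp Cq : ℝ) (hV : 0 < V) (hW : 0 < W) (hWp : 0 < Wp)
    (hphys : (V - 1) * (W * Wp - 1) ≥ 0) (hVW : 0 < V * W - Cq ^ 2)
    (C0 W0 R : ℝ) (hC0 : C0 = Cq / (V * W - Cq ^ 2)) (hW0 : W0 = V / (V * W - Cq ^ 2))
    (hR : R = (1 - (W / V) * W0) * (Wp - W0)) :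
    (0 : ℝ) ∈ Set.Icc (-Real.sqrt R - C0) (Real.sqrt R - C0) ↔
      Cq ^ 2 ≤ (V * W * Wp - V - W * Wp + 1) / Wp := by
  have hD : (0:ℝ) < V * W - Cq ^ 2 := hVW
  have hDne : (V * W - Cq ^ 2) ≠ 0 := ne_of_gt hD
  have hR' : R = ((V * W - Cq ^ 2) - W) * ((V * W - Cq ^ 2) * Wp - V) /
      (V * W - Cq ^ 2) ^ 2 := by
    rw [hR, hW0]; field_simp [hV.ne', (by rw [mul_comm]; exact hDne : W * V - Cq ^ 2 ≠ 0)]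
  have key : C0 ^ 2 ≤ R ↔ Cq ^ 2 ≤ (V * W * Wp - V - W * Wp + 1) / Wp := by
    rw [hC0, hR', div_pow, div_le_div_iff₀ (by positivity) (by positivity),
      le_div_iff₀ hWp, mul_le_mul_iff_of_pos_right (by positivity : (0:ℝ) < (V * W - Cq ^ 2) ^ 2)]
    constructor
    · intro h
      nlinarith [hD, mul_pos hD hWp]
    · intro h
      nlinarith [mul_nonneg hD.le (sub_nonneg.mpr h)]
  constructor
  · rintro ⟨h1, h2⟩
    rcases le_or_gt 0 R with hR0 | hR0
    · have habs : |C0| ≤ Real.sqrt R := abs_le.mpr ⟨by linarith, by linarith⟩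
      have h2' : C0 ^ 2 ≤ R := by
        have := Real.sq_sqrt hR0
        nlinarith [sq_abs C0, Real.sqrt_nonneg R, abs_nonneg C0]
      exact key.mp h2'
    · have hs : Real.sqrt R = 0 := Real.sqrt_eq_zero_of_nonpos hR0.le
      rw [hs] at h1 h2
      have hC0z : C0 = 0 := by linarith
      have hCq : Cq = 0 := by
        rw [hC0] at hC0z
        exact (div_eq_zero_iff.mp hC0z).resolve_right hDne
      rw [hCq, le_div_iff₀ hWp]
      nlinarith
  · intro h
    have hC2 : C0 ^ 2 ≤ R := key.mpr h
    have habs : |C0| ≤ Real.sqrt R := Real.abs_le_sqrt hC2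
    obtain ⟨h1, h2⟩ := abs_le.mp habs
    exact ⟨by linarith, by linarith⟩
end
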